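/- arXiv:2408.12913 — 5 statements merged into one kernel-verified Lean document; each statement's English description precedes it below -/
import Mathlib

section
/- Let G be a graph, H a graph on vertex set {1,...,h}, and V_1,...,V_h disjoint vertex subsets of G with |V_i| ≥ n for all i, such that the number of canonical copies of H (copies with the i-th vertex in V_i) is at least γ·∏|V_i|. Then there exist subsets V_i' ⊆ V_i with |V_i'| = n for all i such that the number of canonical copies of H in (V_1',...,V_h') is at least γ·n^h. -/
/-!
Average over all boxes `W'` with `W' i` an `n`-subset of `W i`. A point of the big box lies in
the same number `∏ i, (|W i| - 1).choose (n - 1)` of these boxes, so summing the number of copies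
inside each box counts every copy of `H` equally often. Since `|W i| · (|W i| - 1).choose (n - 1)
= n · |W i|.choose n`, the average number of copies per box is the fraction `∏ i, n / |W i|` of the
total, which is at least `γ n^h`; some box does at least as well as the average.
-/

open Finset

/-- Number of canonical copies of `H` in `G` with respect to parts `W i`:
injections `f : Fin h → V` with `f i ∈ W i` and preserving adjacency. -/
noncomputable def canonCount {V : Type*} {h : ℕ} (G : SimpleGraph V)
    (H : SimpleGraph (Fin h)) (W : Fin h → Finset V) : ℕ :=
  Nat.card {f : Fin h → V // Function.Injective f ∧ (∀ i, f i ∈ W i) ∧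
    ∀ i j, H.Adj i j → G.Adj (f i) (f j)}

theorem Nat.choose_mul_eq_mul_choose_sub_one (m : ℕ) {n : ℕ} (hn : 0 < n) :
    m.choose n * n = m * (m - 1).choose (n - 1) := by
  obtain ⟨k, rfl⟩ : ∃ k, n = k + 1 := ⟨n - 1, by omega⟩
  cases m with
  | zero => simp
  | succ m => simpa using (Nat.add_one_mul_choose_eq m k).symm

namespace Finset

variable {ι α : Type*} [Fintype ι] [DecidableEq ι]

theorem card_piFinset_powersetCard_mul_pow (W : ι → Finset α) {n : ℕ} (hn : 0 < n) :
    #(Fintype.piFinset fun i ↦ (W i).powersetCard n) * n ^ Fintype.card ι =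
      (∏ i, #(W i)) * ∏ i, (#(W i) - 1).choose (n - 1) := by
  rw [Fintype.card_piFinset, ← card_univ, ← prod_const, ← prod_mul_distrib, ← prod_mul_distrib]
  exact prod_congr rfl fun i _ ↦ by
    rw [card_powersetCard, Nat.choose_mul_eq_mul_choose_sub_one _ hn]

variable [DecidableEq α]

theorem card_powersetCard_filter_mem {s : Finset α} {a : α} (ha : a ∈ s) {n : ℕ} (hn : 0 < n) :
    #{A ∈ s.powersetCard n | a ∈ A} = (#s - 1).choose (n - 1) := by
  simpa only [singleton_subset_iff, card_singleton] using
    card_filter_powersetCard_subset {a} s n (singleton_subset_iff.2 ha) (card_singleton a ▸ hn)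

theorem card_piFinset_powersetCard_filter_forall_mem {W : ι → Finset α} {f : ι → α}
    (hf : ∀ i, f i ∈ W i) {n : ℕ} (hn : 0 < n) :
    #{W' ∈ Fintype.piFinset fun i ↦ (W i).powersetCard n | ∀ i, f i ∈ W' i} =
      ∏ i, (#(W i) - 1).choose (n - 1) := by
  have hfilter : {W' ∈ Fintype.piFinset (fun i ↦ (W i).powersetCard n) | ∀ i, f i ∈ W' i} =
      Fintype.piFinset fun i ↦ {A ∈ (W i).powersetCard n | f i ∈ A} := by
    ext W'
    simp only [mem_filter, Fintype.mem_piFinset, forall_and]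
  rw [hfilter, Fintype.card_piFinset]
  exact prod_congr rfl fun i _ ↦ card_powersetCard_filter_mem (hf i) hn

theorem sum_card_filter_forall_mem_piFinset_powersetCard {F : Finset (ι → α)} {W : ι → Finset α}
    (hF : ∀ f ∈ F, ∀ i, f i ∈ W i) {n : ℕ} (hn : 0 < n) :
    ∑ W' ∈ Fintype.piFinset (fun i ↦ (W i).powersetCard n), #{f ∈ F | ∀ i, f i ∈ W' i} =
      #F * ∏ i, (#(W i) - 1).choose (n - 1) := by
  rw [← smul_eq_mul, ← sum_const]
  refine (sum_card_bipartiteAbove_eq_sum_card_bipartiteBelow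
    (fun (W' : ι → Finset α) (f : ι → α) ↦ ∀ i, f i ∈ W' i)).trans (sum_congr rfl fun f hf ↦ ?_)
  exact card_piFinset_powersetCard_filter_forall_mem (hF f hf) hn

theorem exists_mem_piFinset_powersetCard_mul_pow_le_card_filter {F : Finset (ι → α)}
    {W : ι → Finset α} (hF : ∀ f ∈ F, ∀ i, f i ∈ W i) {n : ℕ} (hn : 0 < n)
    (hW : ∀ i, n ≤ #(W i)) {γ : ℝ} (hγ : γ * ∏ i, (#(W i) : ℝ) ≤ #F) :
    ∃ W' ∈ Fintype.piFinset fun i ↦ (W i).powersetCard n,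
      γ * n ^ Fintype.card ι ≤ #{f ∈ F | ∀ i, f i ∈ W' i} := by
  set S := Fintype.piFinset fun i ↦ (W i).powersetCard n
  set c := ∏ i, (#(W i) - 1).choose (n - 1)
  have hS : S.Nonempty := Fintype.piFinset_nonempty.2 fun i ↦ powersetCard_nonempty.2 (hW i)
  have hbox : (#S : ℝ) * n ^ Fintype.card ι = (∏ i, (#(W i) : ℝ)) * c := by
    exact_mod_cast card_piFinset_powersetCard_mul_pow W hn
  have hsum : ∑ W' ∈ S, (#{f ∈ F | ∀ i, f i ∈ W' i} : ℝ) = #F * c := by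
    exact_mod_cast sum_card_filter_forall_mem_piFinset_powersetCard hF hn
  refine exists_le_of_sum_le hS ?_
  calc ∑ _W' ∈ S, γ * (n : ℝ) ^ Fintype.card ι = γ * (∏ i, (#(W i) : ℝ)) * c := by
        rw [sum_const, nsmul_eq_mul]
        linear_combination γ * hbox
    _ ≤ #F * c := by gcongr
    _ = _ := hsum.symm

end Finset

section CanonCopies

variable {V : Type*} [Fintype V] {h : ℕ}

open Classical in
noncomputable def canonCopies (G : SimpleGraph V) (H : SimpleGraph (Fin h))
    (W : Fin h → Finset V) : Finset (Fin h → V) :=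
  {f | Function.Injective f ∧ (∀ i, f i ∈ W i) ∧ ∀ i j, H.Adj i j → G.Adj (f i) (f j)}

variable {G : SimpleGraph V} {H : SimpleGraph (Fin h)} {W W' : Fin h → Finset V} {f : Fin h → V}

theorem mem_canonCopies : f ∈ canonCopies G H W ↔
    Function.Injective f ∧ (∀ i, f i ∈ W i) ∧ ∀ i j, H.Adj i j → G.Adj (f i) (f j) := by
  simp [canonCopies]

theorem canonCount_eq_card_canonCopies : canonCount G H W = #(canonCopies G H W) := by
  classical
  rw [canonCount, Nat.card_eq_fintype_card, Fintype.card_subtype, canonCopies]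

theorem canonCopies_eq_filter_of_subset [DecidableEq V] (hW : ∀ i, W' i ⊆ W i) :
    canonCopies G H W' = {f ∈ canonCopies G H W | ∀ i, f i ∈ W' i} := by
  ext f
  simp only [mem_filter, mem_canonCopies]
  exact ⟨fun ⟨hinj, hf, hadj⟩ ↦ ⟨⟨hinj, fun i ↦ hW i (hf i), hadj⟩, hf⟩,
    fun ⟨⟨hinj, _, hadj⟩, hf⟩ ↦ ⟨hinj, hf, hadj⟩⟩

end CanonCopies

theorem subsample_inflation_general {V : Type*} [Fintype V] {h n : ℕ} (hn : 0 < n)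
    (G : SimpleGraph V) (H : SimpleGraph (Fin h)) (W : Fin h → Finset V)
    (γ : ℝ)
    (hsize : ∀ i, n ≤ (W i).card)
    (hcount : γ * ∏ i, ((W i).card : ℝ) ≤ (canonCount G H W : ℝ)) :
    ∃ W' : Fin h → Finset V, (∀ i, W' i ⊆ W i) ∧ (∀ i, (W' i).card = n) ∧
      γ * (n : ℝ) ^ h ≤ (canonCount G H W' : ℝ) := by
  classical
  rw [canonCount_eq_card_canonCopies] at hcount
  obtain ⟨W', hW', hdense⟩ := exists_mem_piFinset_powersetCard_mul_pow_le_card_filter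
    (fun f hf ↦ (mem_canonCopies.1 hf).2.1) hn hsize hcount
  simp only [Fintype.mem_piFinset, mem_powersetCard] at hW'
  refine ⟨W', fun i ↦ (hW' i).1, fun i ↦ (hW' i).2, ?_⟩
  rw [Fintype.card_fin] at hdense
  rw [canonCount_eq_card_canonCopies, canonCopies_eq_filter_of_subset fun i ↦ (hW' i).1]
  -- the two filters differ only in their `Decidable` instances for `∀ i : Fin h, _`
  convert hdense using 4

/-- subsampling a `(γ, ≥ n)`-inflation to a `(γ, n)`-inflation. -/
theorem subsample_inflation {V : Type*} [Fintype V] {h n : ℕ} (hn : 0 < n)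
    (G : SimpleGraph V) (H : SimpleGraph (Fin h)) (W : Fin h → Finset V)
    (γ : ℝ) (hγ0 : 0 < γ) (hγ1 : γ ≤ 1)
    (hdisj : ∀ i j, i ≠ j → Disjoint (W i) (W j))
    (hsize : ∀ i, n ≤ (W i).card)
    (hcount : γ * ∏ i, ((W i).card : ℝ) ≤ (canonCount G H W : ℝ)) :
    ∃ W' : Fin h → Finset V, (∀ i, W' i ⊆ W i) ∧ (∀ i, (W' i).card = n) ∧
      γ * (n : ℝ) ^ h ≤ (canonCount G H W' : ℝ) :=
  subsample_inflation_general hn G H W γ hsize hcount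
end

section
/- Let Γ = (A, B, E) be a bipartite graph with |E| ≥ γ|A||B|, and let s be a positive integer. If b_1,...,b_s are chosen independently and uniformly at random from B, then the expected size of the common neighborhood of b_1,...,b_s in A is at least γ^s·|A|. -/
/-!
Counting pairs `(a, b)` with `a` adjacent to every `b i` in two ways, the sum over `b` of the
common neighborhood sizes equals `∑ a, d(a)^s`. Dividing by `|B|^s`, this is `|A|` times the
mean of `(d(a)/|B|)^s`, which by Jensen is at least `|A|` times the `s`-th power of the mean of
`d(a)/|B|`, i.e. of the edge density, which is at least `γ`.
-/

open Finset
open scoped BigOperators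

theorem Finset.pow_expect_le_expect_pow {ι : Type*} {s : Finset ι} (hs : s.Nonempty)
    {f : ι → ℝ} (hf : ∀ i ∈ s, 0 ≤ f i) (n : ℕ) :
    (𝔼 i ∈ s, f i) ^ n ≤ 𝔼 i ∈ s, f i ^ n := by
  have hw : ∑ _i ∈ s, (#s : ℝ)⁻¹ = 1 := by
    rw [sum_const, nsmul_eq_mul, mul_inv_cancel₀ (by exact_mod_cast hs.card_ne_zero)]
  simpa only [expect_eq_sum_div_card, div_eq_inv_mul, mul_sum] using
    Real.pow_arith_mean_le_arith_mean_pow s _ f (fun _ _ => by positivity) hw hf n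

theorem Nat.card_subtype_forall_apply {ι β : Type*} [Fintype ι] (p : β → Prop) :
    Nat.card {f : ι → β // ∀ i, p (f i)} = Nat.card {b // p b} ^ Fintype.card ι := by
  rw [Nat.card_congr Equiv.subtypePiEquivPi, Nat.card_pi, prod_const, Finset.card_univ]

section BipartiteCounting

variable {A B : Type*} [Fintype A] [Fintype B] (R : A → B → Prop)

theorem sum_card_neighbors_eq_card_edges :
    ∑ a, Nat.card {b // R a b} = Nat.card {p : A × B // R p.1 p.2} := by
  rw [Nat.card_congr (Equiv.subtypeProdEquivSigmaSubtype R), Nat.card_sigma]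

theorem sum_card_commonNeighbors_eq_sum_card_neighbors_pow (ι : Type*) [Fintype ι]
    [DecidableEq ι] :
    ∑ b : ι → B, Nat.card {a // ∀ i, R a (b i)}
      = ∑ a, Nat.card {b // R a b} ^ Fintype.card ι := by
  classical
  simp_rw [← Nat.card_subtype_forall_apply]
  simp only [Nat.card_eq_fintype_card, Fintype.card_subtype, card_filter]
  exact sum_comm

end BipartiteCounting

theorem drc_expected_common_neighborhood_general {A B : Type*} [Fintype A] [Fintype B]
    [Nonempty A] [Nonempty B] (R : A → B → Prop) (γ : ℝ) (hγ0 : 0 < γ)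
    (s : ℕ)
    (hE : γ * (Fintype.card A : ℝ) * (Fintype.card B : ℝ)
      ≤ (Nat.card {p : A × B // R p.1 p.2} : ℝ)) :
    γ ^ s * (Fintype.card A : ℝ)
      ≤ (∑ b : Fin s → B, (Nat.card {a : A // ∀ i, R a (b i)} : ℝ))
          / ((Fintype.card B : ℝ)) ^ s := by
  set x : A → ℝ := fun a => (Nat.card {b // R a b} : ℝ) / Fintype.card B with hx
  have hγx : γ ≤ 𝔼 a, x a := by
    rw [Fintype.expect_eq_sum_div_card, hx, ← sum_div, ← Nat.cast_sum,
      sum_card_neighbors_eq_card_edges, le_div_iff₀ (by positivity), le_div_iff₀ (by positivity)]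
    linarith
  have hcount := sum_card_commonNeighbors_eq_sum_card_neighbors_pow R (Fin s)
  rw [Fintype.card_fin] at hcount
  calc γ ^ s * Fintype.card A ≤ (𝔼 a, x a) ^ s * Fintype.card A := by gcongr
    _ ≤ (𝔼 a, x a ^ s) * Fintype.card A := by
      gcongr
      exact pow_expect_le_expect_pow univ_nonempty (fun a _ => by positivity) s
    _ = _ := by
      rw [Fintype.expect_eq_sum_div_card, div_mul_cancel₀ _ (by positivity), ← Nat.cast_sum,
        hcount]
      push_cast
      simp only [hx, div_pow, sum_div]

/-- dependent random choice, first moment: if a bipartite graph between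
`A` and `B` has at least `γ|A||B|` edges, then the expected size of the common
neighborhood of `s` independent uniform vertices of `B` is at least `γ^s|A|`. -/
theorem drc_expected_common_neighborhood {A B : Type*} [Fintype A] [Fintype B]
    [Nonempty A] [Nonempty B] (R : A → B → Prop) (γ : ℝ) (hγ0 : 0 < γ) (hγ1 : γ ≤ 1)
    (s : ℕ) (hs : 0 < s)
    (hE : γ * (Fintype.card A : ℝ) * (Fintype.card B : ℝ)
      ≤ (Nat.card {p : A × B // R p.1 p.2} : ℝ)) :
    γ ^ s * (Fintype.card A : ℝ)
      ≤ (∑ b : Fin s → B, (Nat.card {a : A // ∀ i, R a (b i)} : ℝ))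
          / ((Fintype.card B : ℝ)) ^ s :=
  drc_expected_common_neighborhood_general R γ hγ0 s hE
end

section
/- Let h ≥ 2 and q ≥ 2 be integers, and let H be a connected non-bipartite graph on h vertices. Then the q-color Ramsey multiplicity constant satisfies c_{H,q} ≤ 2^{−(q−1)(h−1)}. Concretely: for every N there is a q-coloring of E(K_N) in which the number of monochromatic labeled copies of H is at most 2^{−(q−1)(h−1)}·N^h + O_{H,q}(N^{h−1}). -/
theorem Nat.xor_eq_zero {n m : ℕ} : n ^^^ m = 0 ↔ n = m := by
  constructor
  · intro h
    apply Nat.eq_of_testBit_eq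
    intro i
    have := congrArg (fun x => Nat.testBit x i) h
    simp only [Nat.testBit_xor, Nat.zero_testBit] at this
    revert this
    cases Nat.testBit n i <;> cases Nat.testBit m i <;> simp
  · rintro rfl
    simp

open Classical in
/-- The least set bit of a natural number (0 if none). -/
noncomputable def lowBit (d : ℕ) : ℕ :=
  if hd : ∃ i, d.testBit i = true then Nat.find hd else 0

lemma lowBit_testBit {d : ℕ} (hd : d ≠ 0) : d.testBit (lowBit d) = true := by
  have hex : ∃ i, d.testBit i = true := by
    by_contra hc
    push_neg at hc
    exact hd (Nat.eq_of_testBit_eq fun i => by simp [hc i])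
  unfold lowBit
  rw [dif_pos hex]
  exact Nat.find_spec hex

lemma lowBit_lt {d n : ℕ} (hd : d ≠ 0) (hlt : d < 2 ^ n) : lowBit d < n := by
  by_contra hc
  push_neg at hc
  have h1 := lowBit_testBit hd
  have h2 : d.testBit (lowBit d) = false :=
    Nat.testBit_lt_two_pow (lt_of_lt_of_le hlt (Nat.pow_le_pow_right (by norm_num) hc))
  simp [h2] at h1

/-- The coloring on `ℕ`: if `a` and `b` agree mod `2^(q-1)` use color `q-1`, otherwise
use the least bit where `a % 2^(q-1)` and `b % 2^(q-1)` differ. -/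
noncomputable def colFun (q : ℕ) (hq : 2 ≤ q) (a b : ℕ) : Fin q :=
  if hab : a % 2 ^ (q - 1) = b % 2 ^ (q - 1) then ⟨q - 1, by omega⟩
  else
    ⟨lowBit (a % 2 ^ (q - 1) ^^^ b % 2 ^ (q - 1)), by
      have hd : a % 2 ^ (q - 1) ^^^ b % 2 ^ (q - 1) ≠ 0 := fun h => hab (Nat.xor_eq_zero.1 h)
      have hlt : a % 2 ^ (q - 1) ^^^ b % 2 ^ (q - 1) < 2 ^ (q - 1) :=
        Nat.xor_lt_two_pow (Nat.mod_lt _ (by positivity)) (Nat.mod_lt _ (by positivity))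
      have := lowBit_lt hd hlt
      omega⟩

lemma colFun_symm (q : ℕ) (hq : 2 ≤ q) (a b : ℕ) : colFun q hq a b = colFun q hq b a := by
  unfold colFun
  by_cases hab : a % 2 ^ (q - 1) = b % 2 ^ (q - 1)
  · rw [dif_pos hab, dif_pos hab.symm]
  · rw [dif_neg hab, dif_neg (fun h => hab h.symm)]
    exact Fin.ext (by simp [Nat.xor_comm])

/-- If the color is not the last color, the corresponding bit separates the two endpoints. -/
lemma colFun_bit {q : ℕ} (hq : 2 ≤ q) {a b : ℕ} {i : Fin q} (hi : (i : ℕ) < q - 1)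
    (hc : colFun q hq a b = i) :
    (a % 2 ^ (q - 1)).testBit i ≠ (b % 2 ^ (q - 1)).testBit i := by
  unfold colFun at hc
  by_cases hab : a % 2 ^ (q - 1) = b % 2 ^ (q - 1)
  · rw [dif_pos hab] at hc
    have : q - 1 = (i : ℕ) := congrArg Fin.val hc
    omega
  · rw [dif_neg hab] at hc
    have hd : a % 2 ^ (q - 1) ^^^ b % 2 ^ (q - 1) ≠ 0 := fun h => hab (Nat.xor_eq_zero.1 h)
    have hval : lowBit (a % 2 ^ (q - 1) ^^^ b % 2 ^ (q - 1)) = (i : ℕ) := congrArg Fin.val hc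
    have htb := lowBit_testBit hd
    rw [hval, Nat.testBit_xor] at htb
    intro heq
    rw [heq] at htb
    simp at htb

/-- If the color is the last color, the two endpoints agree mod `2^(q-1)`. -/
lemma colFun_last {q : ℕ} (hq : 2 ≤ q) {a b : ℕ} {i : Fin q} (hi : ¬ (i : ℕ) < q - 1)
    (hc : colFun q hq a b = i) : a % 2 ^ (q - 1) = b % 2 ^ (q - 1) := by
  unfold colFun at hc
  by_cases hab : a % 2 ^ (q - 1) = b % 2 ^ (q - 1)
  · exact hab
  · rw [dif_neg hab] at hc
    have hd : a % 2 ^ (q - 1) ^^^ b % 2 ^ (q - 1) ≠ 0 := fun h => hab (Nat.xor_eq_zero.1 h)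
    have hlt : a % 2 ^ (q - 1) ^^^ b % 2 ^ (q - 1) < 2 ^ (q - 1) :=
      Nat.xor_lt_two_pow (Nat.mod_lt _ (by positivity)) (Nat.mod_lt _ (by positivity))
    have h1 := lowBit_lt hd hlt
    have hval : lowBit (a % 2 ^ (q - 1) ^^^ b % 2 ^ (q - 1)) = (i : ℕ) := congrArg Fin.val hc
    omega

/-- Binomial-type bound: `(x+1)^(n+1) ≤ x^(n+1) + (n+1)(y+1)^n` for `0 ≤ x ≤ y`. -/
lemma pow_add_one_le {x y : ℝ} (hx : 0 ≤ x) (hxy : x ≤ y) :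
    ∀ n : ℕ, (x + 1) ^ (n + 1) ≤ x ^ (n + 1) + (n + 1) * (y + 1) ^ n := by
  intro n
  induction n with
  | zero => simp
  | succ n ih =>
    have hy1 : (0:ℝ) ≤ y + 1 := by linarith
    have step : (x + 1) ^ (n + 1) * (x + 1) ≤ (x ^ (n + 1) + (n + 1) * (y + 1) ^ n) * (x + 1) :=
      mul_le_mul_of_nonneg_right ih (by linarith)
    have h1 : x ^ (n + 1) ≤ (y + 1) ^ (n + 1) := pow_le_pow_left₀ hx (by linarith) _
    have h2 : (y + 1) ^ n * (x + 1) ≤ (y + 1) ^ (n + 1) := by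
      rw [pow_succ]
      exact mul_le_mul_of_nonneg_left (by linarith) (pow_nonneg hy1 n)
    have h3 : (0:ℝ) ≤ (n:ℝ) + 1 := by positivity
    have h4 : ((n:ℝ) + 1) * ((y + 1) ^ n * (x + 1)) ≤ ((n:ℝ) + 1) * (y + 1) ^ (n + 1) :=
      mul_le_mul_of_nonneg_left h2 h3
    calc (x + 1) ^ (n + 1 + 1) = (x + 1) ^ (n + 1) * (x + 1) := by ring
      _ ≤ (x ^ (n + 1) + (n + 1) * (y + 1) ^ n) * (x + 1) := step
      _ = x ^ (n + 1 + 1) + x ^ (n + 1) + ((n:ℝ) + 1) * ((y + 1) ^ n * (x + 1)) := by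
          push_cast; ring
      _ ≤ x ^ (n + 1 + 1) + (y + 1) ^ (n + 1) + ((n:ℝ) + 1) * (y + 1) ^ (n + 1) := by
          linarith
      _ = x ^ (n + 1 + 1) + ((n:ℝ) + 1 + 1) * (y + 1) ^ (n + 1) := by ring
      _ = x ^ (n + 1 + 1) + (↑(n + 1) + 1) * (y + 1) ^ (n + 1) := by push_cast; ring

/-- for a connected non-bipartite graph `H` on `h` vertices, the `q`-color
Ramsey multiplicity constant is at most `2^{-(q-1)(h-1)}`: for every `N` there is a
`q`-coloring of `E(K_N)` with at most `2^{-(q-1)(h-1)}·N^h + O_{H,q}(N^{h-1})`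
monochromatic labeled copies of `H`. -/
theorem ramsey_multiplicity_upper {h q : ℕ} (hh : 2 ≤ h) (hq : 2 ≤ q)
    (H : SimpleGraph (Fin h)) (hconn : H.Connected) (hnb : ¬ H.Colorable 2) :
    ∃ C : ℝ, ∀ N : ℕ, ∃ c : Sym2 (Fin N) → Fin q,
      (Nat.card {f : Fin h → Fin N // Function.Injective f ∧
          ∃ i : Fin q, ∀ a b : Fin h, H.Adj a b → c s(f a, f b) = i} : ℝ)
        ≤ ((2 : ℝ) ^ ((q - 1) * (h - 1)))⁻¹ * (N : ℝ) ^ h + C * (N : ℝ) ^ (h - 1) := by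
  classical
  set m : ℕ := 2 ^ (q - 1) with hm
  have hm0 : 0 < m := by positivity
  refine ⟨(m : ℝ) * h * 2 ^ (h - 1), fun N => ?_⟩
  set c : Sym2 (Fin N) → Fin q :=
    Sym2.lift ⟨fun u v => colFun q hq (u : ℕ) (v : ℕ),
      fun u v => colFun_symm q hq _ _⟩ with hc
  refine ⟨c, ?_⟩
  set S := {f : Fin h → Fin N // Function.Injective f ∧
      ∃ i : Fin q, ∀ a b : Fin h, H.Adj a b → c s(f a, f b) = i} with hS
  have c0 : Fin h := ⟨0, by omega⟩
  -- Every f in S is constant mod m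
  have hmod : ∀ f : Fin h → Fin N, (∃ i : Fin q, ∀ a b : Fin h,
      H.Adj a b → c s(f a, f b) = i) → ∀ a : Fin h, (f a : ℕ) % m = (f c0 : ℕ) % m := by
    rintro f ⟨i, hi⟩ a
    by_cases hiv : (i : ℕ) < q - 1
    · -- this color class is bipartite, contradiction with non-bipartiteness
      exfalso
      apply hnb
      have col : H.Coloring Bool := SimpleGraph.Coloring.mk
        (fun a => ((f a : ℕ) % m).testBit (i : ℕ))
        (by
          intro a b hab
          have := hi a b hab
          simp only [hc, Sym2.lift_mk] at this
          exact colFun_bit hq hiv this)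
      simpa using col.colorable
    · -- last color: the copy lies within one part
      have hedge : ∀ x y : Fin h, H.Adj x y → (f x : ℕ) % m = (f y : ℕ) % m := by
        intro x y hxy
        have := hi x y hxy
        simp only [hc, Sym2.lift_mk] at this
        exact colFun_last hq hiv this
      obtain ⟨w⟩ := hconn.preconnected a c0
      induction w with
      | nil => rfl
      | cons hadj _ ih => exact (hedge _ _ hadj).trans ih
  -- counting: inject S into Fin m × (Fin h → Fin (N / m + 1))
  set K : ℕ := N / m + 1 with hK
  have hcard : Nat.card S ≤ m * K ^ h := by
    have hinj : Function.Injective (fun f : S =>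
        ((⟨(f.1 c0 : ℕ) % m, Nat.mod_lt _ hm0⟩ : Fin m),
         (fun a => (⟨(f.1 a : ℕ) / m, by
            have : (f.1 a : ℕ) / m ≤ N / m := Nat.div_le_div_right (f.1 a).isLt.le
            omega⟩ : Fin K)))) := by
      rintro ⟨f, hfinj, hfmono⟩ ⟨g, hginj, hgmono⟩ heq
      simp only [Prod.mk.injEq] at heq
      obtain ⟨h1, h2⟩ := heq
      simp only [Fin.mk.injEq] at h1
      refine Subtype.ext (funext fun a => Fin.ext ?_)
      have hdiv : (f a : ℕ) / m = (g a : ℕ) / m := by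
        have := congrFun h2 a
        simpa using congrArg Fin.val this
      have hfa := hmod f hfmono a
      have hga := hmod g hgmono a
      have hmeq : (f a : ℕ) % m = (g a : ℕ) % m := by rw [hfa, h1, ← hga]
      calc (f a : ℕ) = m * ((f a : ℕ) / m) + (f a : ℕ) % m := (Nat.div_add_mod _ _).symm
        _ = m * ((g a : ℕ) / m) + (g a : ℕ) % m := by rw [hdiv, hmeq]
        _ = (g a : ℕ) := Nat.div_add_mod _ _
    calc Nat.card S ≤ Nat.card (Fin m × (Fin h → Fin K)) :=
          Nat.card_le_card_of_injective _ hinj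
      _ = m * K ^ h := by simp [Nat.card_eq_fintype_card]
  -- now the real estimate
  rcases Nat.eq_zero_or_pos N with hN | hN
  · subst hN
    have hempty : IsEmpty S := ⟨fun f => (f.1 c0).elim0⟩
    haveI := hempty
    rw [Nat.card_of_isEmpty]
    have h1 : (0:ℝ) ^ h = 0 := zero_pow (by omega)
    have h2 : (0:ℝ) ^ (h - 1) = 0 := zero_pow (by omega)
    push_cast
    rw [h1, h2]
    simp
  · have hNR : (1:ℝ) ≤ (N:ℝ) := by exact_mod_cast hN
    have hmR : (1:ℝ) ≤ (m:ℝ) := by exact_mod_cast hm0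
    set x : ℝ := (N : ℝ) / m with hx
    have hx0 : 0 ≤ x := div_nonneg (Nat.cast_nonneg N) (Nat.cast_nonneg m)
    have hxN : x ≤ (N : ℝ) := by
      rw [hx, div_le_iff₀ (by linarith)]
      nlinarith
    have hKx : (K : ℝ) ≤ x + 1 := by
      rw [hK]
      push_cast
      have := Nat.cast_div_le (α := ℝ) (m := N) (n := m)
      linarith
    have hstep1 : (Nat.card S : ℝ) ≤ (m : ℝ) * (K : ℝ) ^ h := by
      exact_mod_cast hcard
    have hstep2 : (K : ℝ) ^ h ≤ (x + 1) ^ h :=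
      pow_le_pow_left₀ (by positivity) hKx h
    have hpow : (x + 1) ^ h ≤ x ^ h + h * ((N : ℝ) + 1) ^ (h - 1) := by
      have := pow_add_one_le hx0 hxN (h - 1)
      have hh1 : h - 1 + 1 = h := by omega
      rw [hh1] at this
      calc (x + 1) ^ h ≤ x ^ h + (↑(h - 1) + 1) * ((N:ℝ) + 1) ^ (h - 1) := this
        _ ≤ x ^ h + h * ((N : ℝ) + 1) ^ (h - 1) := by
            have : ((h - 1 : ℕ) : ℝ) + 1 ≤ (h : ℝ) := by
              have : (h : ℝ) = ((h - 1 : ℕ) : ℝ) + 1 := by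
                have : h - 1 + 1 = h := by omega
                exact_mod_cast this.symm
              linarith
            nlinarith [pow_nonneg (by linarith : (0:ℝ) ≤ (N:ℝ) + 1) (h - 1)]
    have hN1 : ((N : ℝ) + 1) ^ (h - 1) ≤ 2 ^ (h - 1) * (N : ℝ) ^ (h - 1) := by
      rw [← mul_pow]
      exact pow_le_pow_left₀ (by linarith) (by linarith) _
    have hmx : (m : ℝ) * x ^ h = ((2 : ℝ) ^ ((q - 1) * (h - 1)))⁻¹ * (N : ℝ) ^ h := by
      have hm2 : (m : ℝ) = 2 ^ (q - 1) := by rw [hm]; push_cast; ring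
      have hmpow : (m : ℝ) ^ (h - 1) = 2 ^ ((q - 1) * (h - 1)) := by rw [hm2, ← pow_mul]
      have hsplit : (m : ℝ) ^ h = (m : ℝ) ^ (h - 1) * m := by
        rw [← pow_succ]
        congr 1
        omega
      have hmne : (m : ℝ) ≠ 0 := by linarith
      have hpne : (m : ℝ) ^ (h - 1) ≠ 0 := pow_ne_zero _ hmne
      rw [hx, div_pow, hsplit, ← hmpow]
      field_simp
    calc (Nat.card S : ℝ) ≤ (m : ℝ) * (K : ℝ) ^ h := hstep1
      _ ≤ (m : ℝ) * (x + 1) ^ h := by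
          exact mul_le_mul_of_nonneg_left hstep2 (by linarith)
      _ ≤ (m : ℝ) * (x ^ h + h * ((N : ℝ) + 1) ^ (h - 1)) :=
          mul_le_mul_of_nonneg_left hpow (by linarith)
      _ = (m : ℝ) * x ^ h + (m : ℝ) * h * ((N : ℝ) + 1) ^ (h - 1) := by ring
      _ ≤ (m : ℝ) * x ^ h + (m : ℝ) * h * (2 ^ (h - 1) * (N : ℝ) ^ (h - 1)) := by
          have : (0:ℝ) ≤ (m : ℝ) * h := by positivity
          nlinarith
      _ = ((2 : ℝ) ^ ((q - 1) * (h - 1)))⁻¹ * (N : ℝ) ^ h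
            + (m : ℝ) * h * 2 ^ (h - 1) * (N : ℝ) ^ (h - 1) := by rw [hmx]; ring
end

section
/- Let G be an n-vertex graph containing at least γ·n^h labeled copies of a graph H on vertex set [h], with n ≥ h. Then there exists a partition of V(G) into sets V_1,...,V_h, each of size between ⌊n/h⌋ and ⌈n/h⌉, such that the number of canonical copies of H (i-th vertex in V_i) is at least γ·n^h/h^h ≥ γ·∏_{i=1}^h |V_i| · (⌊n/h⌋/⌈n/h⌉)^h. -/
open Finset Function

theorem rpcc_fiber_card {V : Type*} [Fintype V] [DecidableEq V] {h n : ℕ}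
    (f : Fin h → V) (hf : Injective f) (g : Fin h → Fin n) (hg : Injective g)
    (hcard : Fintype.card V = n) :
    Fintype.card {σ : V ≃ Fin n // ∀ i, σ (f i) = g i} = (n - h).factorial := by
  classical
  have key : ∀ (σ : V ≃ Fin n), (∀ i, σ (f i) = g i) →
      ∀ v : V, v ∉ Set.range f ↔ σ v ∉ Set.range g := by
    intro σ hσ v
    constructor
    · rintro hv ⟨i, hi⟩
      exact hv ⟨i, σ.injective (by rw [hσ i, hi])⟩
    · rintro hv ⟨i, hi⟩
      exact hv ⟨i, by rw [← hi, hσ i]⟩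
  let ρ : Set.range f ≃ Set.range g :=
    (Equiv.ofInjective f hf).symm.trans (Equiv.ofInjective g hg)
  let E : {σ : V ≃ Fin n // ∀ i, σ (f i) = g i} ≃
      ({v : V // v ∉ Set.range f} ≃ {x : Fin n // x ∉ Set.range g}) :=
    { toFun := fun σ => Equiv.subtypeEquiv σ.1 (fun v => key σ.1 σ.2 v)
      invFun := fun τ =>
        ⟨(Equiv.sumCompl (· ∈ Set.range f)).symm.trans
          ((Equiv.sumCongr ρ τ).trans (Equiv.sumCompl (· ∈ Set.range g))), by
          intro i
          simp only [Equiv.trans_apply]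
          rw [Equiv.sumCompl_symm_apply_of_pos (p := (· ∈ Set.range f)) ⟨i, rfl⟩]
          simp [ρ, Equiv.ofInjective_symm_apply]⟩
      left_inv := by
        rintro ⟨σ, hσ⟩
        ext v
        simp only [Equiv.trans_apply]
        by_cases hv : v ∈ Set.range f
        · rw [Equiv.sumCompl_symm_apply_of_pos hv]
          obtain ⟨i, rfl⟩ := hv
          simp [ρ, Equiv.ofInjective_symm_apply, hσ i]
        · rw [Equiv.sumCompl_symm_apply_of_neg hv]
          simp [Equiv.subtypeEquiv]
      right_inv := by
        intro τ
        ext ⟨v, hv⟩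
        simp only [Equiv.subtypeEquiv, Equiv.coe_fn_mk, Equiv.trans_apply]
        rw [Equiv.sumCompl_symm_apply_of_neg hv]
        simp }
  rw [Fintype.card_congr E]
  have c1 : Fintype.card {v : V // v ∉ Set.range f} = n - h := by
    rw [Fintype.card_subtype_compl]
    have : Fintype.card {v : V // v ∈ Set.range f} = h := by
      rw [Fintype.card_congr (Equiv.ofInjective f hf).symm, Fintype.card_fin]
    rw [this, hcard]
  have c2 : Fintype.card {x : Fin n // x ∉ Set.range g} = n - h := by
    rw [Fintype.card_subtype_compl]
    have : Fintype.card {x : Fin n // x ∈ Set.range g} = h := by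
      rw [Fintype.card_congr (Equiv.ofInjective g hg).symm, Fintype.card_fin]
    rw [this, Fintype.card_fin]
  rw [Fintype.card_equiv (Fintype.equivOfCardEq (c1.trans c2.symm)), c1]

theorem rpcc_constrained_card {V : Type*} [Fintype V] [DecidableEq V] {h n : ℕ}
    (f : Fin h → V) (hf : Injective f) (B : Fin h → Finset (Fin n))
    (hB : ∀ i j, i ≠ j → Disjoint (B i) (B j)) (hcard : Fintype.card V = n) :
    Fintype.card {σ : V ≃ Fin n // ∀ i, σ (f i) ∈ B i}
      = (∏ i, (B i).card) * (n - h).factorial := by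
  classical
  let E : {σ : V ≃ Fin n // ∀ i, σ (f i) ∈ B i} ≃
      Σ g : (Π i, ↥(B i)), {σ : V ≃ Fin n // ∀ i, σ (f i) = (g i : Fin n)} :=
    { toFun := fun σ => ⟨fun i => ⟨σ.1 (f i), σ.2 i⟩, σ.1, fun _ => rfl⟩
      invFun := fun x => ⟨x.2.1, fun i => (x.2.2 i) ▸ (x.1 i).2⟩
      left_inv := fun σ => rfl
      right_inv := by
        rintro ⟨g, σ, hσ⟩
        refine Sigma.ext ?_ ?_
        · funext i; exact Subtype.ext (hσ i)
        · refine (Subtype.heq_iff_coe_eq ?_).2 rfl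
          intro τ
          simp only [funext_iff]
          constructor <;> intro hh i <;> rw [hh i] <;> [skip; skip] <;>
            first | exact (hσ i).symm | exact hσ i }
  rw [Fintype.card_congr E, Fintype.card_sigma]
  have hfib : ∀ g : (Π i, ↥(B i)),
      Fintype.card {σ : V ≃ Fin n // ∀ i, σ (f i) = (g i : Fin n)}
        = (n - h).factorial := by
    intro g
    refine rpcc_fiber_card f hf _ ?_ hcard
    intro i j hij
    by_contra hne
    have h2 : ((g i : Fin n)) ∈ B j := by
      have : ((g i : Fin n)) = (g j : Fin n) := hij
      rw [this]; exact (g j).2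
    exact (Finset.disjoint_left.1 (hB i j hne)) (g i).2 h2
  simp only [hfib, Finset.sum_const, Finset.card_univ, smul_eq_mul]
  congr 1
  rw [Fintype.card_pi]
  exact Finset.prod_congr rfl fun i _ => Fintype.card_coe _

theorem rpcc_blocks_exist {h n : ℕ} (hh : 0 < h) (hn : h ≤ n) :
    ∃ B : Fin h → Finset (Fin n),
      (∀ i j, i ≠ j → Disjoint (B i) (B j)) ∧
      (∀ x : Fin n, ∃ i, x ∈ B i) ∧
      (∀ i : Fin h, (B i).card = n / h + if (i : ℕ) < n % h then 1 else 0) := by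
  classical
  set q := n / h with hq
  set r := n % h with hr
  have hrh : r < h := Nat.mod_lt _ hh
  set a : ℕ → ℕ := fun k => k * q + min k r with ha
  have hmono : Monotone a := by
    intro x y hxy
    exact Nat.add_le_add (Nat.mul_le_mul_right _ hxy) (by omega)
  have hah : a h = n := by
    have hqr : h * q + r = n := Nat.div_add_mod n h
    show h * q + min h r = n
    rw [min_eq_right hrh.le]
    exact hqr
  have hbnd : ∀ k, k ≤ h → a k ≤ n := fun k hk => hah ▸ hmono hk
  refine ⟨fun i => (Finset.Ico (a i) (a (i+1))).attachFin
    (fun m hm => by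
      rw [Finset.mem_Ico] at hm
      exact lt_of_lt_of_le hm.2 (hbnd _ i.2)), ?_, ?_, ?_⟩
  · intro i j hij
    rw [Finset.disjoint_left]
    intro x hx hx'
    rw [Finset.mem_attachFin, Finset.mem_Ico] at hx hx'
    rcases Ne.lt_or_gt (fun e => hij (Fin.ext e)) with hlt' | hlt'
    · exact absurd (lt_of_lt_of_le hx.2 (hmono hlt')) (not_lt.2 hx'.1)
    · exact absurd (lt_of_lt_of_le hx'.2 (hmono hlt')) (not_lt.2 hx.1)
  · intro x
    have hx0 : a 0 ≤ (x : ℕ) := by simp [ha]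
    set i := Nat.findGreatest (fun k => a k ≤ (x : ℕ)) h with hi
    have hspec : a i ≤ (x : ℕ) :=
      Nat.findGreatest_spec (P := fun k => a k ≤ (x : ℕ)) (Nat.zero_le h) hx0
    have hile : i ≤ h := Nat.findGreatest_le h
    have hilt : i < h := by
      rcases lt_or_eq_of_le hile with h' | h'
      · exact h'
      · exfalso; rw [h', hah] at hspec; omega
    have hgt : (x : ℕ) < a (i + 1) := by
      by_contra hc
      exact Nat.findGreatest_is_greatest (Nat.lt_succ_self i) hilt (not_lt.1 hc)
    exact ⟨⟨i, hilt⟩, by rw [Finset.mem_attachFin, Finset.mem_Ico]; exact ⟨hspec, hgt⟩⟩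
  · intro i
    rw [Finset.card_attachFin, Nat.card_Ico]
    show ((i : ℕ) + 1) * q + min ((i : ℕ) + 1) r - ((i : ℕ) * q + min (i : ℕ) r) = _
    rw [add_one_mul]
    clear_value q r a
    clear ha hah hbnd hmono hq hr hn
    rcases lt_or_ge (i : ℕ) r with hc | hc
    · rw [if_pos hc, min_eq_left hc, min_eq_left hc.le]
      generalize (i : ℕ) * q = m
      omega
    · rw [if_neg (not_lt.2 hc), min_eq_right (hc.trans (Nat.le_succ _)), min_eq_right hc]
      generalize (i : ℕ) * q = m
      omega

theorem rpcc_prod_ineq {h n : ℕ} (hh : 0 < h) (hn : h ≤ n) :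
    n.descFactorial h ≤ ∏ i : Fin h, (h * (n / h + if (i : ℕ) < n % h then 1 else 0)) := by
  rw [Nat.descFactorial_eq_prod_range, ← Fin.prod_univ_eq_prod_range (fun k => n - k) h]
  refine Finset.prod_le_prod' ?_
  intro i _
  have hd : h * (n / h) + n % h = n := Nat.div_add_mod n h
  have hr : n % h < h := Nat.mod_lt _ hh
  rcases lt_or_ge (i : ℕ) (n % h) with hc | hc
  · rw [if_pos hc, Nat.mul_add, mul_one]
    generalize hP : h * (n / h) = P at hd ⊢
    omega
  · rw [if_neg (not_lt.2 hc), Nat.mul_add, mul_zero]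
    generalize hP : h * (n / h) = P at hd ⊢
    omega

theorem rpcc_size_ub {h n : ℕ} (hh : 0 < h) (hn : h ≤ n) (i : ℕ) :
    n / h + (if i < n % h then 1 else 0) ≤ (n + h - 1) / h := by
  rcases lt_or_ge i (n % h) with hc | hc
  · rw [if_pos hc]
    rw [Nat.le_div_iff_mul_le hh, add_mul, one_mul]
    have h1 : n / h * h + n % h = n := Nat.div_add_mod' n h
    have hr : n % h < h := Nat.mod_lt _ hh
    generalize hP : n / h * h = P at h1 ⊢
    omega
  · rw [if_neg (not_lt.2 hc), add_zero]
    exact Nat.div_le_div_right (by omega)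

theorem rpcc_arith {γ : ℝ} {h n Cc Pc N : ℕ} (hγ : 0 < γ) (hh : 0 < h) (hn : h ≤ n)
    (havg : Cc * (Pc * (n - h).factorial) ≤ n.factorial * N)
    (hdesc : n.descFactorial h ≤ h ^ h * Pc)
    (hcount : γ * (n : ℝ) ^ h ≤ (Cc : ℝ)) :
    γ * (n : ℝ) ^ h / (h : ℝ) ^ h ≤ (N : ℝ) := by
  have hfd : (n - h).factorial * n.descFactorial h = n.factorial :=
    Nat.factorial_mul_descFactorial hn
  have A1 : (Cc : ℝ) * (Pc * ((n - h).factorial : ℕ)) ≤ (n.factorial : ℝ) * N := by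
    exact_mod_cast havg
  have A2 : ((n.descFactorial h : ℕ) : ℝ) ≤ (h : ℝ) ^ h * (Pc : ℝ) := by
    exact_mod_cast hdesc
  have A3 : (((n - h).factorial : ℕ) : ℝ) * ((n.descFactorial h : ℕ) : ℝ)
      = (n.factorial : ℝ) := by exact_mod_cast hfd
  have hFpos : (0 : ℝ) < (((n - h).factorial : ℕ) : ℝ) := by
    exact_mod_cast (n - h).factorial_pos
  have hfacpos : (0 : ℝ) < (n.factorial : ℝ) := by exact_mod_cast n.factorial_pos
  have hhpos : (0 : ℝ) < (h : ℝ) ^ h := by positivity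
  rw [div_le_iff₀ hhpos]
  have key : γ * (n : ℝ) ^ h * (n.factorial : ℝ)
      ≤ (N : ℝ) * (h : ℝ) ^ h * (n.factorial : ℝ) := by
    calc γ * (n : ℝ) ^ h * (n.factorial : ℝ)
        = (γ * (n : ℝ) ^ h) * ((((n - h).factorial : ℕ) : ℝ)
            * ((n.descFactorial h : ℕ) : ℝ)) := by rw [A3]
      _ ≤ (γ * (n : ℝ) ^ h) * ((((n - h).factorial : ℕ) : ℝ)
            * ((h : ℝ) ^ h * (Pc : ℝ))) := by
          refine mul_le_mul_of_nonneg_left ?_ (by positivity)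
          exact mul_le_mul_of_nonneg_left A2 hFpos.le
      _ = ((γ * (n : ℝ) ^ h) * ((Pc : ℝ) * (((n - h).factorial : ℕ) : ℝ)))
            * (h : ℝ) ^ h := by ring
      _ ≤ ((Cc : ℝ) * ((Pc : ℝ) * (((n - h).factorial : ℕ) : ℝ))) * (h : ℝ) ^ h := by
          refine mul_le_mul_of_nonneg_right ?_ hhpos.le
          exact mul_le_mul_of_nonneg_right hcount (by positivity)
      _ ≤ ((n.factorial : ℝ) * (N : ℝ)) * (h : ℝ) ^ h :=
          mul_le_mul_of_nonneg_right A1 hhpos.le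
      _ = (N : ℝ) * (h : ℝ) ^ h * (n.factorial : ℝ) := by ring
  exact le_of_mul_le_mul_right key hfacpos

/-- if an `n`-vertex graph `G` has at least `γ·n^h` labeled copies of a
graph `H` on `[h]` (with `n ≥ h`), then there is an equitable partition of `V(G)` into
parts `V_1,...,V_h` such that the number of canonical copies of `H` is at least
`γ·n^h/h^h`. -/
theorem random_partition_canonical_copies {V : Type*} [Fintype V] [DecidableEq V]
    {h : ℕ} (hh : 0 < h) (G : SimpleGraph V) (H : SimpleGraph (Fin h))
    (γ : ℝ) (hγ : 0 < γ) (hn : h ≤ Fintype.card V)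
    (hcount : γ * (Fintype.card V : ℝ) ^ h
      ≤ (Nat.card {f : Fin h → V // Function.Injective f ∧
          ∀ i j, H.Adj i j → G.Adj (f i) (f j)} : ℝ)) :
    ∃ W : Fin h → Finset V,
      (∀ i j, i ≠ j → Disjoint (W i) (W j)) ∧
      (∀ v : V, ∃ i, v ∈ W i) ∧
      (∀ i, Fintype.card V / h ≤ (W i).card ∧
        (W i).card ≤ (Fintype.card V + h - 1) / h) ∧
      γ * (Fintype.card V : ℝ) ^ h / (h : ℝ) ^ h
        ≤ (Nat.card {f : Fin h → V // Function.Injective f ∧ (∀ i, f i ∈ W i) ∧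
            ∀ i j, H.Adj i j → G.Adj (f i) (f j)} : ℝ) := by
  classical
  set n := Fintype.card V with hnV
  obtain ⟨B, hBdisj, hBcov, hBcard⟩ := rpcc_blocks_exist hh hn
  set P : (Fin h → V) → Prop := fun f =>
    Function.Injective f ∧ ∀ i j, H.Adj i j → G.Adj (f i) (f j) with hP
  set Copies : Finset (Fin h → V) := univ.filter P with hCopies
  have hCcard : (Nat.card {f : Fin h → V // Function.Injective f ∧
      ∀ i j, H.Adj i j → G.Adj (f i) (f j)}) = Copies.card := by
    rw [Nat.card_eq_fintype_card, Fintype.card_subtype]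
  set Ncan : (V ≃ Fin n) → ℕ := fun σ =>
    (univ.filter (fun f : Fin h → V => P f ∧ ∀ i, σ (f i) ∈ B i)).card with hNcan
  -- double counting
  have hsum : ∑ σ : V ≃ Fin n, Ncan σ
      = Copies.card * ((∏ i, (B i).card) * (n - h).factorial) := by
    have step1 : ∀ σ : V ≃ Fin n,
        Ncan σ = ∑ f ∈ Copies, if (∀ i, σ (f i) ∈ B i) then 1 else 0 := by
      intro σ
      rw [hNcan]
      simp only
      rw [← Finset.card_filter]
      congr 1
      rw [hCopies, Finset.filter_filter]
    rw [Finset.sum_congr rfl fun σ _ => step1 σ, Finset.sum_comm]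
    have step2 : ∀ f ∈ Copies,
        (∑ σ : V ≃ Fin n, if (∀ i, σ (f i) ∈ B i) then 1 else 0)
          = (∏ i, (B i).card) * (n - h).factorial := by
      intro f hf
      have hinj : Function.Injective f := ((Finset.mem_filter.1 hf).2).1
      rw [← Finset.card_filter, ← Fintype.card_subtype]
      exact rpcc_constrained_card f hinj B hBdisj rfl
    rw [Finset.sum_congr rfl step2, Finset.sum_const, smul_eq_mul]
  -- choose the best σ
  have hne : (univ : Finset (V ≃ Fin n)).Nonempty :=
    ⟨Fintype.equivFin V, Finset.mem_univ _⟩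
  obtain ⟨σ, -, hσmax⟩ := Finset.exists_max_image (univ : Finset (V ≃ Fin n)) Ncan hne
  have havg : Copies.card * ((∏ i, (B i).card) * (n - h).factorial)
      ≤ n.factorial * Ncan σ := by
    rw [← hsum]
    calc ∑ τ : V ≃ Fin n, Ncan τ
        ≤ (univ : Finset (V ≃ Fin n)).card • Ncan σ :=
          Finset.sum_le_card_nsmul _ _ _ (fun τ _ => hσmax τ (Finset.mem_univ τ))
      _ = n.factorial * Ncan σ := by
          rw [smul_eq_mul, Finset.card_univ, Fintype.card_equiv (Fintype.equivFin V),
            ← hnV]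
  -- define the parts
  refine ⟨fun i => (B i).map σ.symm.toEmbedding, ?_, ?_, ?_, ?_⟩
  · intro i j hij
    exact (Finset.disjoint_map _).2 (hBdisj i j hij)
  · intro v
    obtain ⟨i, hi⟩ := hBcov (σ v)
    exact ⟨i, Finset.mem_map.2 ⟨σ v, hi, σ.symm_apply_apply v⟩⟩
  · intro i
    rw [Finset.card_map, hBcard i]
    exact ⟨Nat.le_add_right _ _, rpcc_size_ub hh hn _⟩
  · -- the counting bound
    have hmem : ∀ (f : Fin h → V) (i : Fin h),
        f i ∈ (B i).map σ.symm.toEmbedding ↔ σ (f i) ∈ B i := by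
      intro f i
      constructor
      · rintro hm
        obtain ⟨x, hx, hxe⟩ := Finset.mem_map.1 hm
        have : σ (f i) = x := by
          rw [← hxe]; simp
        rw [this]; exact hx
      · intro hm
        exact Finset.mem_map.2 ⟨σ (f i), hm, σ.symm_apply_apply _⟩
    have hNeq : (Nat.card {f : Fin h → V // Function.Injective f ∧
        (∀ i, f i ∈ (B i).map σ.symm.toEmbedding) ∧
        ∀ i j, H.Adj i j → G.Adj (f i) (f j)}) = Ncan σ := by
      rw [Nat.card_eq_fintype_card, Fintype.card_subtype, hNcan]
      congr 1
      apply Finset.filter_congr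
      intro f _
      simp only [hP]
      constructor
      · rintro ⟨h1, h2, h3⟩
        exact ⟨⟨h1, h3⟩, fun i => (hmem f i).1 (h2 i)⟩
      · rintro ⟨⟨h1, h3⟩, h2⟩
        exact ⟨h1, fun i => (hmem f i).2 (h2 i), h3⟩
    rw [hNeq]
    have hdesc : n.descFactorial h ≤ h ^ h * ∏ i, (B i).card := by
      calc n.descFactorial h
          ≤ ∏ i : Fin h, (h * (n / h + if (i : ℕ) < n % h then 1 else 0)) :=
            rpcc_prod_ineq hh hn
        _ = ∏ i : Fin h, (h * (B i).card) := by
            refine Finset.prod_congr rfl fun i _ => ?_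
            rw [hBcard i]
        _ = h ^ h * ∏ i, (B i).card := by
            rw [Finset.prod_mul_distrib, Finset.prod_const, Finset.card_univ,
              Fintype.card_fin]
    exact rpcc_arith hγ hh hn havg hdesc (by rw [← hCcard]; exact hcount)
end

section
/- Define η(q,h,ε) recursively via the bound η(q,h+1,ε) ≥ (ε⁴·q^{−h²}·η(q,h,ε/2))^{q^{4h}/ε}, with base case η(q,1,ε) = 1. Then for all integers q ≥ 2, h ≥ 1 and all ε ∈ (0,1/9], any sequence η satisfying these recursive inequalities obeys η(q,h,ε) ≥ q^{−q^{4h²}/ε^{2h}}. -/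
private lemma self_le_two_rpow (t : ℝ) (ht : 0 ≤ t) : t ≤ (2:ℝ) ^ t := by
  have h2 : t < (⌊t⌋₊ : ℝ) + 1 := Nat.lt_floor_add_one t
  have h3 : ((⌊t⌋₊ : ℝ) + 1) ≤ (2:ℝ) ^ (⌊t⌋₊ : ℕ) := by
    exact_mod_cast Nat.succ_le_of_lt (Nat.lt_two_pow_self (n := ⌊t⌋₊))
  have h4 : (2:ℝ) ^ (⌊t⌋₊ : ℕ) = (2:ℝ) ^ ((⌊t⌋₊ : ℕ) : ℝ) :=
    (Real.rpow_natCast 2 _).symm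
  have h5 : (2:ℝ) ^ ((⌊t⌋₊ : ℕ) : ℝ) ≤ (2:ℝ) ^ t :=
    Real.rpow_le_rpow_of_exponent_le one_le_two (Nat.floor_le ht)
  nlinarith [h4 ▸ h3]

private lemma rpow_neg_four_le (q : ℕ) (hq : 2 ≤ q) (ε : ℝ) (h0 : 0 < ε) (h1 : ε ≤ 1) :
    (q:ℝ) ^ (-(4/ε)) ≤ ε ^ 4 := by
  have hq0 : (0:ℝ) < q := by positivity
  have hq2 : (2:ℝ) ≤ q := by exact_mod_cast hq
  have hstep : (2:ℝ) ^ (-(ε⁻¹)) ≤ ε := by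
    have h := self_le_two_rpow ε⁻¹ (by positivity)
    have hp : (0:ℝ) < (2:ℝ) ^ (ε⁻¹) := Real.rpow_pos_of_pos two_pos _
    rw [Real.rpow_neg (by norm_num)]
    rw [inv_le_comm₀ hp h0]
    calc ε⁻¹ ≤ (2:ℝ) ^ ε⁻¹ := h
    _ ≤ _ := le_rfl
  have h2 : ((2:ℝ) ^ (-(ε⁻¹))) ^ (4:ℕ) ≤ ε ^ 4 :=
    pow_le_pow_left₀ (Real.rpow_nonneg (by norm_num) _) hstep 4
  have h3 : ((2:ℝ) ^ (-(ε⁻¹))) ^ (4:ℕ) = (2:ℝ) ^ (-(4/ε)) := by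
    rw [← Real.rpow_natCast ((2:ℝ) ^ (-(ε⁻¹))) 4, ← Real.rpow_mul (by norm_num)]
    norm_num; ring_nf
  have h4 : (q:ℝ) ^ (-(4/ε)) ≤ (2:ℝ) ^ (-(4/ε)) := by
    rw [Real.rpow_neg hq0.le (4/ε), Real.rpow_neg (by norm_num : (0:ℝ) ≤ 2) (4/ε)]
    apply inv_anti₀ (Real.rpow_pos_of_pos two_pos _)
    exact Real.rpow_le_rpow (by norm_num) hq2 (by positivity)
  calc (q:ℝ) ^ (-(4/ε)) ≤ (2:ℝ) ^ (-(4/ε)) := h4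
  _ = ((2:ℝ) ^ (-(ε⁻¹))) ^ (4:ℕ) := h3.symm
  _ ≤ ε ^ 4 := h2

set_option maxHeartbeats 1000000 in
/-- any function `η` satisfying the base case `η 1 ε = 1` and the
recursive inequality `η (h+1) ε ≥ (ε⁴·q^{-h²}·η h (ε/2))^{q^{4h}/ε}` obeys
`η h ε ≥ q^{-q^{4h²}/ε^{2h}}` for all `h ≥ 1` and `ε ∈ (0,1/9]`. -/
theorem eta_lower_bound (q : ℕ) (hq : 2 ≤ q) (η : ℕ → ℝ → ℝ)
    (hbase : ∀ ε : ℝ, 0 < ε → η 1 ε = 1)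
    (hrec : ∀ h : ℕ, 1 ≤ h → ∀ ε : ℝ, 0 < ε → ε ≤ 1 / 9 →
      (ε ^ 4 * ((q : ℝ) ^ (h ^ 2))⁻¹ * η h (ε / 2)) ^ ((q : ℝ) ^ (4 * h) / ε)
        ≤ η (h + 1) ε) :
    ∀ h : ℕ, 1 ≤ h → ∀ ε : ℝ, 0 < ε → ε ≤ 1 / 9 →
      (q : ℝ) ^ (-((q : ℝ) ^ (4 * h ^ 2) / ε ^ (2 * h))) ≤ η h ε := by
  have hq0 : (0:ℝ) < q := by positivity
  have hq1 : (1:ℝ) ≤ q := by exact_mod_cast hq.trans' (by norm_num)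
  have hq2 : (2:ℝ) ≤ q := by exact_mod_cast hq
  intro h hh
  induction h, hh using Nat.le_induction with
  | base =>
    intro ε hε hε9
    rw [hbase ε hε]
    apply Real.rpow_le_one_of_one_le_of_nonpos hq1
    have : (0:ℝ) < (q:ℝ) ^ (4 * 1 ^ 2) / ε ^ (2 * 1) := by positivity
    linarith
  | succ h hh IH =>
    intro ε hε hε9
    have hε1 : ε ≤ 1 := by linarith
    have IH' := IH (ε/2) (by positivity) (by linarith)
    -- abbreviations
    set A : ℝ := 4/ε + (h:ℝ)^2 + (q:ℝ)^(4*h^2) / (ε/2)^(2*h) with hA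
    set P : ℝ := (q:ℝ)^(4*h) / ε with hP
    have hP0 : 0 < P := by positivity
    -- step 1: base ≥ q^(-A)
    have hb1 : (q:ℝ) ^ (-A) ≤ ε ^ 4 * ((q : ℝ) ^ (h ^ 2))⁻¹ * η h (ε / 2) := by
      have e1 : (q:ℝ) ^ (-A) = (q:ℝ) ^ (-(4/ε)) * (q:ℝ) ^ (-((h:ℝ)^2)) *
          (q:ℝ) ^ (-((q:ℝ)^(4*h^2) / (ε/2)^(2*h))) := by
        rw [← Real.rpow_add hq0, ← Real.rpow_add hq0, hA]; ring_nf
      rw [e1]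
      have t1 : (q:ℝ) ^ (-(4/ε)) ≤ ε ^ 4 := rpow_neg_four_le q hq ε hε hε1
      have t2 : (q:ℝ) ^ (-((h:ℝ)^2)) = ((q : ℝ) ^ (h ^ 2))⁻¹ := by
        rw [show -((h:ℝ)^2) = ((-(h^2:ℤ) : ℤ) : ℝ) by push_cast; ring]
        rw [Real.rpow_intCast, zpow_neg]; norm_cast
      have t3 : (q:ℝ) ^ (-((q:ℝ)^(4*h^2) / (ε/2)^(2*h))) ≤ η h (ε/2) := IH'
      have p1 : (0:ℝ) ≤ (q:ℝ) ^ (-(4/ε)) := Real.rpow_nonneg hq0.le _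
      have p3 : (0:ℝ) ≤ (q:ℝ) ^ (-((q:ℝ)^(4*h^2) / (ε/2)^(2*h))) := Real.rpow_nonneg hq0.le _
      rw [t2]
      have p2 : (0:ℝ) ≤ ((q : ℝ) ^ (h ^ 2))⁻¹ := by positivity
      gcongr
    -- step 2: use hrec
    have hb2 : ((q:ℝ) ^ (-A)) ^ P ≤ η (h+1) ε := by
      calc ((q:ℝ) ^ (-A)) ^ P
          ≤ (ε ^ 4 * ((q : ℝ) ^ (h ^ 2))⁻¹ * η h (ε / 2)) ^ P :=
            Real.rpow_le_rpow (Real.rpow_nonneg hq0.le _) hb1 hP0.le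
        _ ≤ η (h+1) ε := hrec h hh ε hε hε9
    have hb3 : ((q:ℝ) ^ (-A)) ^ P = (q:ℝ) ^ (-A * P) := (Real.rpow_mul hq0.le _ _).symm
    -- step 3: exponent arithmetic
    have key : A * P ≤ (q:ℝ) ^ (4 * (h+1) ^ 2) / ε ^ (2 * (h+1)) := by
      have hεp : (0:ℝ) < ε ^ (2*h+2) := by positivity
      rw [← mul_le_mul_iff_of_pos_right hεp]
      have lhs_eq : A * P * ε ^ (2*h+2) =
          (q:ℝ)^(4*h) * (4 * ε^(2*h) + (h:ℝ)^2 * ε^(2*h+1) +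
            (2:ℝ)^(2*h) * (q:ℝ)^(4*h^2) * ε) := by
        rw [hA, hP]
        have h2 : (ε/2)^(2*h) = ε^(2*h) / 2^(2*h) := div_pow ε 2 (2*h)
        rw [h2]
        field_simp
        ring
      have rhs_eq : (q:ℝ) ^ (4 * (h+1) ^ 2) / ε ^ (2 * (h+1)) * ε ^ (2*h+2) =
          (q:ℝ) ^ (4 * (h+1) ^ 2) := by
        rw [show 2*(h+1) = 2*h+2 by ring]
        field_simp
      rw [lhs_eq, rhs_eq]
      -- bound the three summands
      have b1 : 4 * ε^(2*h) ≤ 1 := by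
        have : ε^(2*h) ≤ ε^2 := pow_le_pow_of_le_one hε.le hε1 (by omega)
        nlinarith [sq_nonneg ε]
      have hh9 : (h:ℝ) * ε^h ≤ 1 := by
        have h9 : (h:ℝ) ≤ (9:ℝ)^h := by
          calc (h:ℝ) ≤ (2:ℝ)^h := by exact_mod_cast (Nat.lt_two_pow_self (n := h)).le
          _ ≤ (9:ℝ)^h := pow_le_pow_left₀ (by norm_num) (by norm_num) h
        have he : ε^h ≤ (1/9:ℝ)^h := pow_le_pow_left₀ hε.le hε9 h
        calc (h:ℝ) * ε^h ≤ (9:ℝ)^h * (1/9:ℝ)^h := by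
              apply mul_le_mul h9 he (by positivity) (by positivity)
        _ = 1 := by rw [← mul_pow]; norm_num
      have b2 : (h:ℝ)^2 * ε^(2*h+1) ≤ 1 := by
        have e : (h:ℝ)^2 * ε^(2*h+1) = ((h:ℝ) * ε^h)^2 * ε := by ring
        rw [e]
        have : ((h:ℝ) * ε^h)^2 ≤ 1 := by
          have h0 : (0:ℝ) ≤ (h:ℝ) * ε^h := by positivity
          nlinarith
        nlinarith
      have b3 : (2:ℝ)^(2*h) * (q:ℝ)^(4*h^2) * ε ≤ (q:ℝ)^(4*h^2 + 2*h) := by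
        have e1 : (2:ℝ)^(2*h) ≤ (q:ℝ)^(2*h) := pow_le_pow_left₀ (by norm_num) hq2 _
        have e2 : (q:ℝ)^(4*h^2 + 2*h) = (q:ℝ)^(2*h) * (q:ℝ)^(4*h^2) := by
          rw [← pow_add]; ring_nf
        rw [e2]
        calc (2:ℝ)^(2*h) * (q:ℝ)^(4*h^2) * ε ≤ (q:ℝ)^(2*h) * (q:ℝ)^(4*h^2) * 1 := by
              apply mul_le_mul (by gcongr <;> positivity) hε1 hε.le (by positivity)
        _ = _ := by ring
      have qbig : (q:ℝ)^(4*h^2+2*h) + 2 ≤ (q:ℝ)^(4*(h+1)^2 - 4*h) := by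
        have hE : 4*h^2+2*h+1 ≤ 4*(h+1)^2 - 4*h := by
          have e : (h+1)^2 = h^2+2*h+1 := by ring
          omega
        have s1 : (q:ℝ)^(4*h^2+2*h) * 2 ≤ (q:ℝ)^(4*h^2+2*h) * q := by
          apply mul_le_mul_of_nonneg_left hq2 (by positivity)
        have s2 : (q:ℝ)^(4*h^2+2*h) * q = (q:ℝ)^(4*h^2+2*h+1) :=
          (pow_succ _ _).symm
        have s3 : (q:ℝ)^(4*h^2+2*h+1) ≤ (q:ℝ)^(4*(h+1)^2 - 4*h) :=
          pow_le_pow_right₀ hq1 hE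
        have s4 : (2:ℝ) ≤ (q:ℝ)^(4*h^2+2*h) := by
          calc (2:ℝ) ≤ (q:ℝ) := hq2
          _ = (q:ℝ)^1 := (pow_one _).symm
          _ ≤ (q:ℝ)^(4*h^2+2*h) := pow_le_pow_right₀ hq1
              (le_trans (by omega) (Nat.le_add_left (2*h) (4*h^2)))
        nlinarith
      have sumb : 4 * ε^(2*h) + (h:ℝ)^2 * ε^(2*h+1) +
            (2:ℝ)^(2*h) * (q:ℝ)^(4*h^2) * ε ≤ (q:ℝ)^(4*(h+1)^2 - 4*h) := by
        nlinarith [b1, b2, b3, qbig]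
      calc (q:ℝ)^(4*h) * (4 * ε^(2*h) + (h:ℝ)^2 * ε^(2*h+1) +
            (2:ℝ)^(2*h) * (q:ℝ)^(4*h^2) * ε)
          ≤ (q:ℝ)^(4*h) * (q:ℝ)^(4*(h+1)^2 - 4*h) := by
            apply mul_le_mul_of_nonneg_left sumb (by positivity)
        _ = (q:ℝ) ^ (4 * (h+1) ^ 2) := by
            rw [← pow_add]
            congr 1
            have e : (h+1)^2 = h^2+2*h+1 := by ring
            omega
    -- conclude
    have final : (q:ℝ) ^ (-((q : ℝ) ^ (4 * (h+1) ^ 2) / ε ^ (2 * (h+1)))) ≤ (q:ℝ) ^ (-A * P) := by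
      apply Real.rpow_le_rpow_of_exponent_le hq1
      rw [neg_mul]
      exact neg_le_neg key
    calc (q:ℝ) ^ (-((q : ℝ) ^ (4 * (h+1) ^ 2) / ε ^ (2 * (h+1)))) ≤ (q:ℝ) ^ (-A * P) := final
      _ = ((q:ℝ) ^ (-A)) ^ P := hb3.symm
      _ ≤ η (h+1) ε := hb2
end
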